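/- arXiv:2201.08772 — 2 statements merged into one kernel-verified Lean document; each statement's English description precedes it below -/
import Mathlib

section
/- n-step belief values under a policy equal the belief-weighted n-step state values: in a POMDP with reward function R and observable goal set G, for every observation-based policy σ, every n ∈ ℕ, and every belief b over S with an observation, V_n^σ(b) = ∑_{s∈S} b(s)·W_n^σ(s). -/
open Finset

attribute [local instance] Classical.propDecidable

noncomputable section

/-- A belief over a finite type `S`: a nonnegative function summing to one. -/
def IsBelief {S : Type} [Fintype S] (b : S → ℝ) : Prop :=
  (∀ s, 0 ≤ b s) ∧ (∑ s, b s = 1)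

/-- A belief clip for a belief `b`: `0 ≤ μ(s) ≤ b(s)` pointwise and `Σμ < 1`. -/
def IsBeliefClip {S : Type} [Fintype S] (b μ : S → ℝ) : Prop :=
  (∀ s, 0 ≤ μ s ∧ μ s ≤ b s) ∧ (∑ s, μ s < 1)

/-- The induced function `b ⊖ μ`, defined by `(b ⊖ μ)(s) = (b(s) − μ(s)) / (1 − Σμ)`. -/
def clipped {S : Type} [Fintype S] (b μ : S → ℝ) : S → ℝ :=
  fun s => (b s - μ s) / (1 - ∑ s', μ s')

variable {S Act Z : Type}

/-- The set of actions enabled in state `s`: those whose outgoing probabilities sum to 1. -/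
def enabledA [Fintype S] [Fintype Act] (P : S → Act → S → ℝ) (s : S) : Finset Act :=
  univ.filter fun α => ∑ s' : S, P s α s' = 1

/-- The actions enabled at an observation `z`: `Act(z) = Act(s)` for some `s` with `O s = z`. -/
def obsEnabled [Fintype S] [Fintype Act] (O : S → Z) (P : S → Act → S → ℝ) (z : Z) :
    Finset Act :=
  if h : ∃ s, O s = z then enabledA P h.choose else ∅

/-- The POMDP assumptions on the observation function `O` and the transition function `P`:
nonnegative transition probabilities, each state-action row sums to 0 or 1, every state has
some enabled action, and equally-observed states have equal enabled actions. -/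
def IsPOMDP [Fintype S] [Fintype Act] (O : S → Z) (P : S → Act → S → ℝ) : Prop :=
  (∀ s α s', 0 ≤ P s α s') ∧
  (∀ s α, (∑ s', P s α s') = 0 ∨ (∑ s', P s α s') = 1) ∧
  (∀ s, (enabledA P s).Nonempty) ∧
  (∀ s s', O s = O s' → enabledA P s = enabledA P s')

/-- `b` has observation `z`: the support of `b` is contained in `O⁻¹(z)`. -/
def HasObs (O : S → Z) (b : S → ℝ) (z : Z) : Prop :=
  ∀ s, 0 < b s → O s = z

/-- `P(s,α,z)`: probability to observe `z` after taking `α` in state `s`. -/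
def Pso [Fintype S] (O : S → Z) (P : S → Act → S → ℝ) (s : S) (α : Act) (z : Z) : ℝ :=
  ∑ s' : S, if O s' = z then P s α s' else 0

/-- `P(b,α,z)`: probability to observe `z` after taking `α` in belief `b`. -/
def Pbo [Fintype S] (O : S → Z) (P : S → Act → S → ℝ) (b : S → ℝ) (α : Act) (z : Z) : ℝ :=
  ∑ s : S, b s * Pso O P s α z

/-- The successor belief `⟦b|α,z⟧`. -/
def succB [Fintype S] (O : S → Z) (P : S → Act → S → ℝ) (b : S → ℝ) (α : Act) (z : Z) :
    S → ℝ :=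
  fun s => if O s = z then (∑ s' : S, b s' * P s' α s) / Pbo O P b α z else 0

/-- The belief reward `R(b,α,z)`. -/
def Rbel [Fintype S] (O : S → Z) (P R : S → Act → S → ℝ) (b : S → ℝ) (α : Act) (z : Z) : ℝ :=
  (∑ s : S, b s * ∑ s' : S, if O s' = z then R s α s' * P s α s' else 0) / Pbo O P b α z

/-- The last observation of a finite observation trace `z₀ α₁ z₁ … αₙ zₙ`,
represented as the pair of `z₀` and the list `[(α₁,z₁),…,(αₙ,zₙ)]`. -/
def lastObs (τ : Z × List (Act × Z)) : Z :=
  (τ.2.getLast?.map Prod.snd).getD τ.1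

/-- An observation-based policy: to each finite observation trace it assigns a probability
distribution over actions supported on the actions enabled at the last observation. -/
def IsObsPolicy [Fintype S] [Fintype Act] (O : S → Z) (P : S → Act → S → ℝ)
    (σ : Z × List (Act × Z) → Act → ℝ) : Prop :=
  ∀ τ, (∀ α, 0 ≤ σ τ α) ∧ (∑ α, σ τ α = 1) ∧
    (∀ α, σ τ α ≠ 0 → ∀ s, O s = lastObs τ → α ∈ enabledA P s)

/-- The shifted policy `σ⇝(z,α)`, behaving as `σ` after observing `z` and taking `α`. -/
def shiftPol (σ : Z × List (Act × Z) → Act → ℝ) (z : Z) (α : Act) :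
    Z × List (Act × Z) → Act → ℝ :=
  fun τ => σ (z, (α, τ.1) :: τ.2)

/-- Goal states are observable: membership in `G` is determined by the observation. -/
def ObservableGoal (O : S → Z) (G : Set S) : Prop :=
  ∃ Z' : Set Z, ∀ s, s ∈ G ↔ O s ∈ Z'

/-- The `n`-step state values `W_n^σ` under an observation-based policy `σ`. -/
def Wval [Fintype S] [Fintype Act] (O : S → Z) (P R : S → Act → S → ℝ) (G : Set S) :
    ℕ → (Z × List (Act × Z) → Act → ℝ) → S → ℝ
  | 0, _, _ => 0
  | n+1, σ, s =>
    if s ∈ G then 0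
    else ∑ α ∈ enabledA P s, σ (O s, []) α *
      ∑ s' : S, P s α s' * (R s α s' + Wval O P R G n (shiftPol σ (O s) α) s')

/-- The `n`-step belief values `V_n^σ(b)` under policy `σ`, for a belief `b` with
observation `z`. -/
def Vpol [Fintype S] [Fintype Act] [Fintype Z] (O : S → Z) (P R : S → Act → S → ℝ)
    (G : Set S) :
    ℕ → (Z × List (Act × Z) → Act → ℝ) → (S → ℝ) → Z → ℝ
  | 0, _, _, _ => 0
  | n+1, σ, b, z =>
    if ∀ s, 0 < b s → s ∈ G then 0
    else ∑ α ∈ obsEnabled O P z, σ (z, []) α *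
      ∑ z' ∈ univ.filter (fun z' => 0 < Pbo O P b α z'),
        Pbo O P b α z' *
          (Rbel O P R b α z' + Vpol O P R G n (shiftPol σ z α) (succB O P b α z') z')

/-- Maximum of `f` over a finite set (0 for the empty set). -/
def maxOver {α : Type} (t : Finset α) (f : α → ℝ) : ℝ :=
  if h : t.Nonempty then t.sup' h f else 0

/-- Minimum of `f` over a finite set (0 for the empty set). -/
def minOver {α : Type} (t : Finset α) (f : α → ℝ) : ℝ :=
  if h : t.Nonempty then t.inf' h f else 0

/-- The `n`-step optimal belief values `V_n(b)`, for a belief `b` with observation `z`. -/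
def Vopt [Fintype S] [Fintype Act] [Fintype Z] (O : S → Z) (P R : S → Act → S → ℝ)
    (G : Set S) :
    ℕ → (S → ℝ) → Z → ℝ
  | 0, _, _ => 0
  | n+1, b, z =>
    if ∀ s, 0 < b s → s ∈ G then 0
    else maxOver (obsEnabled O P z) fun α =>
      ∑ z' ∈ univ.filter (fun z' => 0 < Pbo O P b α z'),
        Pbo O P b α z' * (Rbel O P R b α z' + Vopt O P R G n (succB O P b α z') z')

/-- The `n`-step minimal values `U_n` on the underlying fully observable MDP. -/
def Umin [Fintype S] [Fintype Act] (P R : S → Act → S → ℝ) (G : Set S) : ℕ → S → ℝ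
  | 0, _ => 0
  | n+1, s =>
    if s ∈ G then 0
    else minOver (enabledA P s) fun α =>
      ∑ s' : S, P s α s' * (R s α s' + Umin P R G n s')

end



section helpers

lemma lastObs_cons {Act Z : Type} (z : Z) (α : Act) (τ : Z × List (Act × Z)) :
    lastObs (z, (α, τ.1) :: τ.2) = lastObs τ := by
  obtain ⟨z0, l⟩ := τ
  cases l with
  | nil => simp [lastObs]
  | cons a l =>
    simp only [lastObs, List.getLast?_cons_cons]
    rcases h : (a :: l).getLast? with _ | p
    · simp at h
    · simp

lemma shiftPol_policy {S Act Z : Type} [Fintype S] [Fintype Act]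
    (O : S → Z) (P : S → Act → S → ℝ)
    (σ : Z × List (Act × Z) → Act → ℝ) (hσ : IsObsPolicy O P σ) (z : Z) (α : Act) :
    IsObsPolicy O P (shiftPol σ z α) := by
  intro τ
  obtain ⟨h1, h2, h3⟩ := hσ (z, (α, τ.1) :: τ.2)
  exact ⟨h1, h2, fun β hβ s hs => h3 β hβ s (by rwa [lastObs_cons])⟩

end helpers

/-- `n`-step belief values under a policy equal the belief-weighted
`n`-step state values: `V_n^σ(b) = ∑_s b(s)·W_n^σ(s)`. -/
theorem stmt_10 {S Act Z : Type} [Fintype S] [Nonempty S] [Fintype Act] [Nonempty Act]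
    [Fintype Z] [Nonempty Z]
    (O : S → Z) (P : S → Act → S → ℝ) (hM : IsPOMDP O P)
    (R : S → Act → S → ℝ) (G : Set S) (hG : ObservableGoal O G)
    (σ : Z × List (Act × Z) → Act → ℝ) (hσ : IsObsPolicy O P σ) (n : ℕ)
    (b : S → ℝ) (z : Z) (hb : IsBelief b) (hobs : HasObs O b z) :
    Vpol O P R G n σ b z = ∑ s, b s * Wval O P R G n σ s := by
  obtain ⟨hP0, hP01, hAne, hAeq⟩ := hM
  obtain ⟨Z', hZ'⟩ := hG
  induction n generalizing σ b z with
  | zero => simp [Vpol, Wval]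
  | succ n ih =>
    by_cases hall : ∀ s, 0 < b s → s ∈ G
    · rw [Vpol, if_pos hall]
      symm
      refine Finset.sum_eq_zero fun s _ => ?_
      rcases eq_or_lt_of_le (hb.1 s) with h | h
      · rw [← h, zero_mul]
      · rw [Wval, if_pos (hall s h), mul_zero]
    · push_neg at hall
      obtain ⟨s₀, hbs₀, hs₀G⟩ := hall
      have hz₀ : O s₀ = z := hobs s₀ hbs₀
      have hnG : ∀ s, O s = z → s ∉ G := fun s hs hG' =>
        hs₀G ((hZ' s₀).2 (by rw [hz₀, ← hs]; exact (hZ' s).1 hG'))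
      have hAz : ∀ s, O s = z → enabledA P s = obsEnabled O P z := by
        intro s hs
        have hex : ∃ s, O s = z := ⟨s₀, hz₀⟩
        rw [obsEnabled, dif_pos hex]
        exact hAeq s hex.choose (by rw [hs, hex.choose_spec])
      have hnotall : ¬ ∀ s, 0 < b s → s ∈ G := fun h => hs₀G (h s₀ hbs₀)
      rw [Vpol, if_neg hnotall]
      have hW : ∀ s, b s * Wval O P R G (n+1) σ s =
          b s * ∑ α ∈ obsEnabled O P z, σ (z, []) α *
            ∑ s' : S, P s α s' * (R s α s' + Wval O P R G n (shiftPol σ z α) s') := by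
        intro s
        rcases eq_or_lt_of_le (hb.1 s) with h | h
        · rw [← h, zero_mul, zero_mul]
        · have hOs := hobs s h
          rw [Wval, if_neg (hnG s hOs), hAz s hOs, hOs]
      rw [Finset.sum_congr rfl fun s _ => hW s]
      simp only [Finset.mul_sum]
      rw [Finset.sum_comm]
      refine Finset.sum_congr rfl fun α hα => ?_
      -- per-α goal
      set σ' := shiftPol σ z α with hσ'def
      have hσ' : IsObsPolicy O P σ' := shiftPol_policy O P σ hσ z α
      have key : (∑ z' ∈ univ.filter (fun z' => 0 < Pbo O P b α z'),
            Pbo O P b α z' * (Rbel O P R b α z' + Vpol O P R G n σ' (succB O P b α z') z'))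
          = ∑ s, b s * ∑ s', P s α s' * (R s α s' + Wval O P R G n σ' s') := by
        set T : Z → ℝ := fun z' => ∑ s, ∑ s', b s * P s α s' *
          (if O s' = z' then R s α s' + Wval O P R G n σ' s' else 0) with hT
        have stepI : ∀ z' ∈ univ.filter (fun z' => 0 < Pbo O P b α z'),
            Pbo O P b α z' * (Rbel O P R b α z' + Vpol O P R G n σ' (succB O P b α z') z')
              = T z' := by
          intro z' hz'
          have hPz : 0 < Pbo O P b α z' := (Finset.mem_filter.1 hz').2
          have hN : Pbo O P b α z'
              = ∑ s, (if O s = z' then ∑ s', b s' * P s' α s else 0) := by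
            simp only [Pbo, Pso, Finset.mul_sum]
            rw [Finset.sum_comm]
            refine Finset.sum_congr rfl fun s _ => ?_
            by_cases h : O s = z' <;> simp [h, Finset.mul_sum]
          have hsb : IsBelief (succB O P b α z') := by
            constructor
            · intro s
              rw [succB]
              split
              · exact div_nonneg (Finset.sum_nonneg fun s' _ =>
                  mul_nonneg (hb.1 s') (hP0 _ _ _)) hPz.le
              · exact le_refl 0
            · have hconv : ∀ s : S, succB O P b α z' s
                  = (if O s = z' then ∑ s' : S, b s' * P s' α s else 0) / Pbo O P b α z' := by
                intro s
                rw [succB]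
                split <;> simp
              simp only [hconv]
              rw [← Finset.sum_div, ← hN, div_self hPz.ne']
          have hso : HasObs O (succB O P b α z') z' := by
            intro s hs
            by_contra h
            rw [succB, if_neg h] at hs
            exact lt_irrefl 0 hs
          have hV := ih σ' hσ' (succB O P b α z') z' hsb hso
          rw [hV]
          have hA1 : Pbo O P b α z' * Rbel O P R b α z'
              = ∑ s, ∑ s', b s * (if O s' = z' then R s α s' * P s α s' else 0) := by
            rw [Rbel, mul_div_cancel₀ _ hPz.ne']
            exact Finset.sum_congr rfl fun s _ => Finset.mul_sum _ _ _
          have hA2 : Pbo O P b α z' * ∑ s', succB O P b α z' s' * Wval O P R G n σ' s'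
              = ∑ s', (if O s' = z' then ∑ s, b s * P s α s' else 0)
                  * Wval O P R G n σ' s' := by
            rw [Finset.mul_sum]
            refine Finset.sum_congr rfl fun s' _ => ?_
            rw [succB]
            split
            · rw [← mul_assoc, mul_div_cancel₀ _ hPz.ne']
            · simp
          rw [mul_add, hA1, hA2, hT]
          have split_ite : ∀ s s' : S, b s * P s α s' *
              (if O s' = z' then R s α s' + Wval O P R G n σ' s' else 0)
              = b s * (if O s' = z' then R s α s' * P s α s' else 0)
                + (if O s' = z' then b s * P s α s' else 0) * Wval O P R G n σ' s' := by
            intro s s'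
            by_cases h : O s' = z' <;> simp [h] <;> ring
          simp only [split_ite]
          simp only [Finset.sum_add_distrib]
          congr 1
          conv_rhs => rw [Finset.sum_comm]
          refine Finset.sum_congr rfl fun s' _ => ?_
          rw [← Finset.sum_mul]
          congr 1
          by_cases h : O s' = z' <;> simp [h]
        have stepII : ∀ z' ∈ (univ : Finset Z),
            z' ∉ univ.filter (fun z' => 0 < Pbo O P b α z') → T z' = 0 := by
          intro z' _ hz'
          have hnpos : ¬ 0 < Pbo O P b α z' := by
            simpa using hz'
          have hPnn : ∀ s, 0 ≤ b s * Pso O P s α z' := fun s =>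
            mul_nonneg (hb.1 s) (Finset.sum_nonneg fun s' _ => by
              split <;> [exact hP0 _ _ _; exact le_refl 0])
          have hP0' : Pbo O P b α z' = 0 :=
            le_antisymm (not_lt.1 hnpos) (Finset.sum_nonneg fun s _ => hPnn s)
          have hterm : ∀ s, b s * Pso O P s α z' = 0 := by
            intro s
            have := (Finset.sum_eq_zero_iff_of_nonneg (fun s _ => hPnn s)).1 hP0'
            exact this s (Finset.mem_univ s)
          rw [hT]
          refine Finset.sum_eq_zero fun s _ => Finset.sum_eq_zero fun s' _ => ?_
          rcases eq_or_lt_of_le (hb.1 s) with h | h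
          · rw [← h, zero_mul, zero_mul]
          · by_cases ho : O s' = z'
            · have hPso : Pso O P s α z' = 0 := by
                have := hterm s
                rcases mul_eq_zero.1 this with h1 | h1
                · exact absurd h1 h.ne'
                · exact h1
              have : P s α s' = 0 := by
                have h2 := (Finset.sum_eq_zero_iff_of_nonneg (fun s'' _ => by
                  split <;> [exact hP0 _ _ _; exact le_refl 0])).1 hPso s' (Finset.mem_univ s')
                rwa [if_pos ho] at h2
              rw [this, mul_zero, zero_mul]
            · rw [if_neg ho, mul_zero]
        rw [Finset.sum_congr rfl stepI, Finset.sum_subset (Finset.filter_subset _ _) stepII]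
        -- Step III
        rw [Finset.sum_comm]
        refine Finset.sum_congr rfl fun s _ => ?_
        rw [Finset.sum_comm, Finset.mul_sum]
        refine Finset.sum_congr rfl fun s' _ => ?_
        rw [← Finset.mul_sum, Finset.sum_ite_eq univ (O s')
          (fun _ => R s α s' + Wval O P R G n σ' s'), if_pos (Finset.mem_univ _)]
        ring
      rw [← Finset.mul_sum, key, Finset.mul_sum]
      refine Finset.sum_congr rfl fun s _ => ?_
      rw [Finset.mul_sum, Finset.mul_sum]
      exact Finset.sum_congr rfl fun i _ => by ring
end

section
/- Limit form of the belief-weighted value identity for nonnegative rewards: in a POMDP with reward function R satisfying R(s,α,s') ≥ 0 for all s, α, s' and observable goal set G, for every observation-based policy σ and every belief b over S with an observation, ⨆_{n∈ℕ} V_n^σ(b) = ∑_{s∈S} b(s)·(⨆_{n∈ℕ} W_n^σ(s)), where the suprema are taken in [0,∞] and the sum is evaluated in [0,∞] with coefficients b(s) ≥ 0. -/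
open Finset

attribute [local instance] Classical.propDecidable

/-!
For a belief `b` supported on a single observation, one step of the belief recursion is the
`b`-average of one step of the state recursion: weighting the successor beliefs `⟦b|α,z⟧` by
`P(b,α,z)` recovers the joint distribution `b(s)·P(s,α,s')` fibre by fibre of `O`, and since
goal states are observable the stopping tests of `V` and `W` agree on the support of `b`.
Induction on `n` gives `V_n^σ(b) = ∑ b(s)·W_n^σ(s)`. With nonnegative rewards `W_n^σ(s)`
increases with `n`, so in `[0,∞]` the supremum commutes with the finite sum.
-/

theorem ENNReal.iSup_ofReal_sum_mul {ι : Type*} (t : Finset ι) {b : ι → ℝ} {f : ℕ → ι → ℝ}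
    (hb : ∀ i, 0 ≤ b i) (hf : ∀ n i, 0 ≤ f n i) (hmono : ∀ i, Monotone (f · i)) :
    ⨆ n, ENNReal.ofReal (∑ i ∈ t, b i * f n i) =
      ∑ i ∈ t, ENNReal.ofReal (b i) * ⨆ n, ENNReal.ofReal (f n i) := by
  simp_rw [ENNReal.mul_iSup]
  rw [ENNReal.finsetSum_iSup_of_monotone
    (f := fun i n => ENNReal.ofReal (b i) * ENNReal.ofReal (f n i))
    fun i _ _ hmn => mul_le_mul' le_rfl (ENNReal.ofReal_le_ofReal (hmono i hmn))]
  refine iSup_congr fun n => ?_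
  rw [ENNReal.ofReal_sum_of_nonneg fun i _ => mul_nonneg (hb i) (hf n i)]
  exact sum_congr rfl fun i _ => ENNReal.ofReal_mul (hb i)

theorem Finset.sum_mul_congr_of_ne_zero {ι R : Type*} [NonUnitalNonAssocSemiring R]
    {t : Finset ι} {b f g : ι → R}
    (h : ∀ i, b i ≠ 0 → f i = g i) : ∑ i ∈ t, b i * f i = ∑ i ∈ t, b i * g i :=
  sum_congr rfl fun i _ => by
    by_cases hi : b i = 0
    · rw [hi, zero_mul, zero_mul]
    · rw [h i hi]

theorem Finset.sum_mul_sum_mul_comm {ι κ R : Type*} [CommSemiring R] (t : Finset ι)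
    (u : Finset κ) (b : ι → R) (c : κ → R) (X : ι → κ → R) :
    ∑ i ∈ t, b i * ∑ j ∈ u, c j * X i j = ∑ j ∈ u, c j * ∑ i ∈ t, b i * X i j := by
  simp only [mul_sum]
  rw [sum_comm]
  simp only [mul_left_comm]

theorem ObservableGoal.mem_iff_of_obs_eq {S Z : Type} {O : S → Z} {G : Set S}
    (hG : ObservableGoal O G) {s t : S} (h : O s = O t) : s ∈ G ↔ t ∈ G := by
  obtain ⟨Z', hZ'⟩ := hG
  rw [hZ', hZ', h]

theorem IsPOMDP.obsEnabled_obs {S Act Z : Type} [Fintype S] [Fintype Act] {O : S → Z}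
    {P : S → Act → S → ℝ} (hM : IsPOMDP O P) (s : S) :
    obsEnabled O P (O s) = enabledA P s := by
  have hex : ∃ t, O t = O s := ⟨s, rfl⟩
  rw [obsEnabled, dif_pos hex]
  exact hM.2.2.2 _ _ hex.choose_spec

section StateValues

variable {S Act Z : Type} [Fintype S] [Fintype Act] {O : S → Z} {P R : S → Act → S → ℝ}
  {G : Set S}

theorem Wval_nonneg (hP : ∀ s α s', 0 ≤ P s α s') (hR : ∀ s α s', 0 ≤ R s α s') (n : ℕ) :
    ∀ {σ : Z × List (Act × Z) → Act → ℝ}, (∀ τ α, 0 ≤ σ τ α) →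
      ∀ s, 0 ≤ Wval O P R G n σ s := by
  induction n with
  | zero => intro σ _ s; exact le_rfl
  | succ n ih =>
    intro σ hσ s
    rw [Wval]
    split_ifs
    · exact le_rfl
    · exact sum_nonneg fun α _ => mul_nonneg (hσ _ _) <| sum_nonneg fun s' _ =>
        mul_nonneg (hP _ _ _) (add_nonneg (hR _ _ _) (ih (fun _ _ => hσ _ _) s'))

theorem Wval_le_Wval_succ (hP : ∀ s α s', 0 ≤ P s α s') (hR : ∀ s α s', 0 ≤ R s α s')
    (n : ℕ) : ∀ {σ : Z × List (Act × Z) → Act → ℝ}, (∀ τ α, 0 ≤ σ τ α) →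
      ∀ s, Wval O P R G n σ s ≤ Wval O P R G (n + 1) σ s := by
  induction n with
  | zero => intro σ hσ s; exact Wval_nonneg hP hR 1 hσ s
  | succ n ih =>
    intro σ hσ s
    rw [Wval, Wval]
    split_ifs
    · exact le_rfl
    · gcongr with α _ s' _
      · exact hσ _ _
      · exact hP _ _ _
      · exact ih (fun _ _ => hσ _ _) s'

theorem Wval_monotone (hP : ∀ s α s', 0 ≤ P s α s') (hR : ∀ s α s', 0 ≤ R s α s')
    {σ : Z × List (Act × Z) → Act → ℝ} (hσ : ∀ τ α, 0 ≤ σ τ α) (s : S) :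
    Monotone fun n => Wval O P R G n σ s :=
  monotone_nat_of_le_succ fun n => Wval_le_Wval_succ hP hR n hσ s

end StateValues

section BeliefUpdate

variable {S Act Z : Type} [Fintype S] {O : S → Z} {P : S → Act → S → ℝ} {b : S → ℝ}

theorem Pso_nonneg (hP : ∀ s α s', 0 ≤ P s α s') (s : S) (α : Act) (z : Z) :
    0 ≤ Pso O P s α z :=
  sum_nonneg fun s' _ => by split_ifs; exacts [hP _ _ _, le_rfl]

theorem Pbo_nonneg (hP : ∀ s α s', 0 ≤ P s α s') (hb : ∀ s, 0 ≤ b s) (α : Act) (z : Z) :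
    0 ≤ Pbo O P b α z :=
  sum_nonneg fun s _ => mul_nonneg (hb s) (Pso_nonneg hP s α z)

theorem succB_nonneg (hP : ∀ s α s', 0 ≤ P s α s') (hb : ∀ s, 0 ≤ b s) (α : Act) (z : Z)
    (s : S) : 0 ≤ succB O P b α z s := by
  rw [succB]
  split_ifs
  · exact div_nonneg (sum_nonneg fun s' _ => mul_nonneg (hb s') (hP _ _ _))
      (Pbo_nonneg hP hb α z)
  · exact le_rfl

theorem succB_hasObs (b : S → ℝ) (α : Act) (z : Z) : HasObs O (succB O P b α z) z := by
  intro s hs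
  by_contra h
  rw [succB, if_neg h] at hs
  exact hs.false

noncomputable def obsJointSum (O : S → Z) (P : S → Act → S → ℝ) (b : S → ℝ) (α : Act) (z : Z)
    (g : S → S → ℝ) : ℝ :=
  ∑ s, b s * ∑ s', if O s' = z then P s α s' * g s s' else 0

variable {α : Act} {z : Z}

theorem obsJointSum_add (g h : S → S → ℝ) :
    obsJointSum O P b α z (g + h) = obsJointSum O P b α z g + obsJointSum O P b α z h := by
  simp only [obsJointSum, ← sum_add_distrib, ← mul_add]
  refine sum_congr rfl fun s _ => congrArg _ (sum_congr rfl fun s' _ => ?_)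
  split_ifs <;> simp only [Pi.add_apply, mul_add, add_zero]

theorem sum_obsJointSum [Fintype Z] (g : S → S → ℝ) :
    ∑ z, obsJointSum O P b α z g = ∑ s, b s * ∑ s', P s α s' * g s s' := by
  simp only [obsJointSum, mul_sum]
  rw [sum_comm]
  refine sum_congr rfl fun s _ => ?_
  rw [sum_comm]
  refine sum_congr rfl fun s' _ => ?_
  simp only [mul_ite, mul_zero, sum_ite_eq, mem_univ, if_true]

theorem obsJointSum_eq_zero_of_Pbo_eq_zero (hP : ∀ s α s', 0 ≤ P s α s')
    (hb : ∀ s, 0 ≤ b s) (h : Pbo O P b α z = 0) (g : S → S → ℝ) :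
    obsJointSum O P b α z g = 0 := by
  have hweight : ∀ s s', b s * (if O s' = z then P s α s' else 0) = 0 := by
    intro s s'
    have hs : b s * Pso O P s α z = 0 := congrFun
      ((Fintype.sum_eq_zero_iff_of_nonneg fun s => mul_nonneg (hb s) (Pso_nonneg hP s α z)).1 h) s
    rw [Pso, mul_sum] at hs
    refine congrFun ((Fintype.sum_eq_zero_iff_of_nonneg fun s' => mul_nonneg (hb s) ?_).1 hs) s'
    split_ifs
    exacts [hP _ _ _, le_rfl]
  refine sum_eq_zero fun s _ => ?_
  rw [mul_sum]
  refine sum_eq_zero fun s' _ => ?_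
  have hss' := hweight s s'
  split_ifs at hss' ⊢
  · rw [← mul_assoc, hss', zero_mul]
  · exact mul_zero _

theorem Pbo_mul_Rbel (R : S → Act → S → ℝ) (h : Pbo O P b α z ≠ 0) :
    Pbo O P b α z * Rbel O P R b α z = obsJointSum O P b α z fun s s' => R s α s' := by
  rw [Rbel, mul_div_cancel₀ _ h, obsJointSum]
  simp only [mul_comm (R _ _ _)]

theorem Pbo_mul_sum_succB_mul (w : S → ℝ) (h : Pbo O P b α z ≠ 0) :
    Pbo O P b α z * ∑ s', succB O P b α z s' * w s' =
      obsJointSum O P b α z fun _ s' => w s' := by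
  simp only [obsJointSum, mul_sum]
  rw [sum_comm]
  refine sum_congr rfl fun s' _ => ?_
  by_cases hs' : O s' = z
  · simp only [succB, if_pos hs', div_mul_eq_mul_div, mul_div_cancel₀ _ h, sum_mul]
    exact sum_congr rfl fun s _ => by ring
  · simp only [succB, if_neg hs', zero_mul, mul_zero, sum_const_zero]

theorem sum_Pbo_mul_Rbel_add_succB [Fintype Z] (hP : ∀ s α s', 0 ≤ P s α s')
    (hb : ∀ s, 0 ≤ b s) (R : S → Act → S → ℝ) (w : S → ℝ) :
    ∑ z ∈ univ.filter (fun z => 0 < Pbo O P b α z),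
        Pbo O P b α z * (Rbel O P R b α z + ∑ s', succB O P b α z s' * w s') =
      ∑ s, b s * ∑ s', P s α s' * (R s α s' + w s') := by
  have hterm : ∀ z ∈ univ.filter (fun z => 0 < Pbo O P b α z),
      Pbo O P b α z * (Rbel O P R b α z + ∑ s', succB O P b α z s' * w s') =
        obsJointSum O P b α z fun s s' => R s α s' + w s' := fun z hz => by
    have hpos : Pbo O P b α z ≠ 0 := (mem_filter.1 hz).2.ne'
    rw [mul_add, Pbo_mul_Rbel R hpos, Pbo_mul_sum_succB_mul w hpos, ← obsJointSum_add]
    rfl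
  rw [sum_congr rfl hterm, ← sum_obsJointSum (Z := Z), ← sum_filter_add_sum_filter_not univ
    (fun z => 0 < Pbo O P b α z), left_eq_add]
  refine sum_eq_zero fun z hz => obsJointSum_eq_zero_of_Pbo_eq_zero hP hb ?_ _
  exact ((Pbo_nonneg hP hb α z).eq_of_not_lt (mem_filter.1 hz).2).symm

end BeliefUpdate

theorem Vpol_eq_sum_mul_Wval {S Act Z : Type} [Fintype S] [Fintype Act] [Fintype Z]
    {O : S → Z} {P R : S → Act → S → ℝ} {G : Set S} (hM : IsPOMDP O P)
    (hG : ObservableGoal O G) (n : ℕ) :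
    ∀ (σ : Z × List (Act × Z) → Act → ℝ) (b : S → ℝ) (z : Z), (∀ s, 0 ≤ b s) →
      HasObs O b z → Vpol O P R G n σ b z = ∑ s, b s * Wval O P R G n σ s := by
  induction n with
  | zero => intro σ b z _ _; simp [Vpol, Wval]
  | succ n ih =>
    intro σ b z hb hobs
    by_cases hgoal : ∀ s, 0 < b s → s ∈ G
    · rw [Vpol, if_pos hgoal, eq_comm]
      refine sum_eq_zero fun s _ => ?_
      rcases (hb s).eq_or_lt with hs | hs
      · rw [← hs, zero_mul]
      · rw [Wval, if_pos (hgoal s hs), mul_zero]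
    rw [Vpol, if_neg hgoal]
    push Not at hgoal
    obtain ⟨s₀, hs₀, hs₀G⟩ := hgoal
    have hWval : ∀ s, b s ≠ 0 → Wval O P R G (n + 1) σ s =
        ∑ α ∈ obsEnabled O P z, σ (z, []) α *
          ∑ s', P s α s' * (R s α s' + Wval O P R G n (shiftPol σ z α) s') := by
      intro s hs
      have hOs : O s = z := hobs s ((hb s).lt_of_ne' hs)
      have hsG : s ∉ G :=
        mt (hG.mem_iff_of_obs_eq ((hobs s₀ hs₀).trans hOs.symm)).2 hs₀G
      rw [Wval, if_neg hsG, ← hOs, hM.obsEnabled_obs]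
    rw [sum_mul_congr_of_ne_zero hWval, sum_mul_sum_mul_comm]
    refine sum_congr rfl fun α _ => congrArg _ ?_
    refine (sum_congr rfl fun z' _ => ?_).trans (sum_Pbo_mul_Rbel_add_succB hM.1 hb R _)
    rw [ih _ _ _ (succB_nonneg hM.1 hb α z') (succB_hasObs b α z')]

theorem stmt_11_general {S Act Z : Type} [Fintype S] [Fintype Act] [Fintype Z]
    (O : S → Z) (P : S → Act → S → ℝ) (hM : IsPOMDP O P)
    (R : S → Act → S → ℝ) (G : Set S) (hR : ∀ s α s', 0 ≤ R s α s')
    (hG : ObservableGoal O G)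
    (σ : Z × List (Act × Z) → Act → ℝ) (hσ : IsObsPolicy O P σ)
    (b : S → ℝ) (z : Z) (hb : IsBelief b) (hobs : HasObs O b z) :
    (⨆ n : ℕ, ENNReal.ofReal (Vpol O P R G n σ b z)) =
      ∑ s, ENNReal.ofReal (b s) * ⨆ n : ℕ, ENNReal.ofReal (Wval O P R G n σ s) := by
  have hσ₀ : ∀ τ α, 0 ≤ σ τ α := fun τ α => (hσ τ).1 α
  simp_rw [Vpol_eq_sum_mul_Wval hM hG _ σ b z hb.1 hobs]
  exact ENNReal.iSup_ofReal_sum_mul univ hb.1 (fun n => Wval_nonneg hM.1 hR n hσ₀)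
    (Wval_monotone hM.1 hR hσ₀)

/-- limit form of the belief-weighted value identity for nonnegative rewards,
with suprema and the sum taken in `[0,∞]`. -/
theorem stmt_11 {S Act Z : Type} [Fintype S] [Nonempty S] [Fintype Act] [Nonempty Act]
    [Fintype Z] [Nonempty Z]
    (O : S → Z) (P : S → Act → S → ℝ) (hM : IsPOMDP O P)
    (R : S → Act → S → ℝ) (G : Set S) (hR : ∀ s α s', 0 ≤ R s α s')
    (hG : ObservableGoal O G)
    (σ : Z × List (Act × Z) → Act → ℝ) (hσ : IsObsPolicy O P σ)
    (b : S → ℝ) (z : Z) (hb : IsBelief b) (hobs : HasObs O b z) :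
    (⨆ n : ℕ, ENNReal.ofReal (Vpol O P R G n σ b z)) =
      ∑ s, ENNReal.ofReal (b s) * ⨆ n : ℕ, ENNReal.ofReal (Wval O P R G n σ s) :=
  stmt_11_general O P hM R G hR hG σ hσ b z hb hobs
end
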